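/- (Invariability of collinearity under pinhole projection, necessity.) With the same pinhole setup, suppose the projected points u₁, u₂, u₃ are collinear, x₁, x₂, x₃ ∈ ℝ³ are distinct, and there exists a plane containing x₁, x₂, x₃ that does not contain the camera center c = -Rᵀt. Then x₁, x₂, x₃ are collinear in world coordinates. -/

import Mathlib

/-!
Back-projecting the image line through the camera gives a plane through the camera center `c`:
each `xₖ - c` is a multiple of `Rᵀ K⁻¹ (uₖ, 1)`, and these vectors span a subspace of dimension
at most two because the `uₖ` are collinear. If the `xₖ` were not collinear, their direction space
would have dimension two and would therefore coincide both with that subspace and with the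
direction of the given plane, forcing `c` into the plane.
-/

open Module Submodule Matrix

section Affine

variable {k V P : Type*} [Field k] [AddCommGroup V] [Module k V] [AddTorsor V P]

theorem Collinear.finrank_span_image_le_two {V₂ : Type*} [AddCommGroup V₂] [Module k V₂]
    {s : Set P} (h : Collinear k s) (f : P →ᵃ[k] V₂) :
    finrank k (span k (f '' s)) ≤ 2 := by
  obtain ⟨p₀, v, hs⟩ := (collinear_iff_exists_forall_eq_smul_vadd s).1 h
  classical
  have := FiniteDimensional.span_of_finite k (Set.toFinite {f p₀, f.linear v})
  calc finrank k (span k (f '' s)) ≤ finrank k (span k {f p₀, f.linear v}) := by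
        refine Submodule.finrank_mono (span_le.2 ?_)
        rintro _ ⟨p, hp, rfl⟩
        obtain ⟨r, rfl⟩ := hs p hp
        rw [f.map_vadd, map_smul, vadd_eq_add, add_comm]
        exact add_mem (subset_span (by simp)) (smul_mem _ r (subset_span (by simp)))
    _ ≤ 2 := by
        refine (finrank_span_le_card _).trans ?_
        rw [Set.toFinset_insert, Set.toFinset_singleton]
        exact Finset.card_le_two

theorem AffineSubspace.mem_of_forall_vsub_mem_of_not_collinear [FiniteDimensional k V]
    {s : Set P} {Q : AffineSubspace k P} {W : Submodule k V} {c : P}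
    (hs : ¬Collinear k s) (hsQ : s ⊆ Q) (hQ : finrank k Q.direction ≤ 2)
    (hW : finrank k W ≤ 2) (hsW : ∀ p ∈ s, p -ᵥ c ∈ W) : c ∈ Q := by
  have h2 : 2 ≤ finrank k (vectorSpan k s) := by
    rw [collinear_iff_finrank_le_one] at hs
    omega
  have hsW' : vectorSpan k s ≤ W := by
    rw [vectorSpan_def, span_le]
    rintro _ ⟨p, hp, q, hq, rfl⟩
    change p -ᵥ q ∈ W
    rw [← vsub_sub_vsub_cancel_right p q c]
    exact sub_mem (hsW p hp) (hsW q hq)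
  have hsQ' : vectorSpan k s ≤ Q.direction := by
    simpa only [direction_affineSpan] using
      AffineSubspace.direction_le (affineSpan_le.2 hsQ)
  have hWQ : W = Q.direction :=
    (eq_of_le_of_finrank_le hsW' (hW.trans h2)).symm.trans
      (eq_of_le_of_finrank_le hsQ' (hQ.trans h2))
  obtain ⟨p, hp⟩ : s.Nonempty := Set.nonempty_iff_ne_empty.2 fun h => hs (h ▸ collinear_empty k P)
  exact (AffineSubspace.vsub_left_mem_direction_iff_mem (hsQ hp) c).1 (hWQ ▸ hsW p hp)

end Affine

def homogenize (k : Type*) [CommRing k] : (Fin 2 → k) →ᵃ[k] (Fin 3 → k) where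
  toFun u := ![u 0, u 1, 1]
  linear :=
    { toFun := fun v => ![v 0, v 1, 0]
      map_add' := fun v w => by ext i; fin_cases i <;> simp
      map_smul' := fun r v => by ext i; fin_cases i <;> simp }
  map_vadd' u v := by ext i; fin_cases i <;> simp [add_comm]

theorem Matrix.add_transpose_mulVec_eq_smul_of_smul_eq_mulVec {ι A : Type*} [Fintype ι]
    [DecidableEq ι] [CommRing A] {R K : Matrix ι ι A} {t x y : ι → A} {s : A}
    (hR : Rᵀ * R = 1) (hK : IsUnit K.det) (h : s • y = K *ᵥ (R *ᵥ x + t)) :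
    x + Rᵀ *ᵥ t = s • ((Rᵀ * K⁻¹) *ᵥ y) :=
  calc x + Rᵀ *ᵥ t = Rᵀ *ᵥ (R *ᵥ x + t) := by
        rw [mulVec_add, mulVec_mulVec, hR, one_mulVec]
    _ = Rᵀ *ᵥ (K⁻¹ *ᵥ (s • y)) := by
        rw [h, mulVec_mulVec _ K⁻¹ K, nonsing_inv_mul K hK, one_mulVec]
    _ = s • ((Rᵀ * K⁻¹) *ᵥ y) := by simp only [mulVec_smul, mulVec_mulVec]

theorem pinhole_collinear_necessity_general
    (R K : Matrix (Fin 3) (Fin 3) ℝ) (t : Fin 3 → ℝ)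
    (hR : R.transpose * R = 1)
    (hK : IsUnit K.det)
    (x₁ x₂ x₃ : Fin 3 → ℝ) (u₁ u₂ u₃ : Fin 2 → ℝ) (s₁ s₂ s₃ : ℝ)
    (hp₁ : s₁ • ![u₁ 0, u₁ 1, 1] = K.mulVec (R.mulVec x₁ + t))
    (hp₂ : s₂ • ![u₂ 0, u₂ 1, 1] = K.mulVec (R.mulVec x₂ + t))
    (hp₃ : s₃ • ![u₃ 0, u₃ 1, 1] = K.mulVec (R.mulVec x₃ + t))
    (hucol : Collinear ℝ ({u₁, u₂, u₃} : Set (Fin 2 → ℝ)))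
    (hplane : ∃ Q : AffineSubspace ℝ (Fin 3 → ℝ),
      Module.finrank ℝ Q.direction = 2 ∧
      x₁ ∈ Q ∧ x₂ ∈ Q ∧ x₃ ∈ Q ∧ -(R.transpose.mulVec t) ∉ Q) :
    Collinear ℝ ({x₁, x₂, x₃} : Set (Fin 3 → ℝ)) := by
  obtain ⟨Q, hQ, hx₁, hx₂, hx₃, hc⟩ := hplane
  set W := (span ℝ (homogenize ℝ '' {u₁, u₂, u₃})).map (Rᵀ * K⁻¹).mulVecLin
  have hW : finrank ℝ W ≤ 2 :=
    (finrank_map_le _ _).trans (hucol.finrank_span_image_le_two _)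
  have hray : ∀ {x u} {s : ℝ}, u ∈ ({u₁, u₂, u₃} : Set (Fin 2 → ℝ)) →
      s • homogenize ℝ u = K *ᵥ (R *ᵥ x + t) → x -ᵥ -(Rᵀ *ᵥ t) ∈ W := by
    intro x u s hu hp
    rw [vsub_eq_sub, sub_neg_eq_add,
      Matrix.add_transpose_mulVec_eq_smul_of_smul_eq_mulVec hR hK hp]
    exact smul_mem _ _ (mem_map_of_mem (subset_span (Set.mem_image_of_mem _ hu)))
  by_contra hx
  refine hc (AffineSubspace.mem_of_forall_vsub_mem_of_not_collinear hx ?_ hQ.le hW ?_)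
  · simp [Set.insert_subset_iff, hx₁, hx₂, hx₃]
  · rintro p (rfl | rfl | rfl)
    exacts [hray (by simp) hp₁, hray (by simp) hp₂, hray (by simp) hp₃]

/-- Invariability of collinearity under pinhole projection (necessity):
if the projected points are collinear, the world points are distinct, and some
plane contains the three world points but not the camera center `-Rᵀt`, then
the world points are collinear. -/
theorem pinhole_collinear_necessity
    (R K : Matrix (Fin 3) (Fin 3) ℝ) (t : Fin 3 → ℝ)
    (hR : R.transpose * R = 1) (hRdet : R.det = 1)
    (hK : IsUnit K.det)
    (hK20 : K 2 0 = 0) (hK21 : K 2 1 = 0) (hK22 : K 2 2 = 1)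
    (x₁ x₂ x₃ : Fin 3 → ℝ) (u₁ u₂ u₃ : Fin 2 → ℝ) (s₁ s₂ s₃ : ℝ)
    (hs₁ : s₁ ≠ 0) (hs₂ : s₂ ≠ 0) (hs₃ : s₃ ≠ 0)
    (hp₁ : s₁ • ![u₁ 0, u₁ 1, 1] = K.mulVec (R.mulVec x₁ + t))
    (hp₂ : s₂ • ![u₂ 0, u₂ 1, 1] = K.mulVec (R.mulVec x₂ + t))
    (hp₃ : s₃ • ![u₃ 0, u₃ 1, 1] = K.mulVec (R.mulVec x₃ + t))
    (hucol : Collinear ℝ ({u₁, u₂, u₃} : Set (Fin 2 → ℝ)))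
    (hne₁₂ : x₁ ≠ x₂) (hne₁₃ : x₁ ≠ x₃) (hne₂₃ : x₂ ≠ x₃)
    (hplane : ∃ Q : AffineSubspace ℝ (Fin 3 → ℝ),
      Module.finrank ℝ Q.direction = 2 ∧
      x₁ ∈ Q ∧ x₂ ∈ Q ∧ x₃ ∈ Q ∧ -(R.transpose.mulVec t) ∉ Q) :
    Collinear ℝ ({x₁, x₂, x₃} : Set (Fin 3 → ℝ)) :=
  pinhole_collinear_necessity_general R K t hR hK x₁ x₂ x₃ u₁ u₂ u₃ s₁ s₂ s₃ hp₁ hp₂ hp₃ hucol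
    hplane
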